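/- In the Weyl module Δ_q(i), let d > 0 be an H-eigenvalue, so the eigenspace is ℂ·m_k with k = (i-d)/2, and let a₁ ∈ ℤ_{≥0}, 1 ≤ a₂ < ℓ with d ≥ a₁ℓ + a₂. Then F^{(a₁ℓ+a₂)} m_k = 0 if and only if m_k = F^{(ℓ-a₂)} y for some y in the H-eigenspace of eigenvalue d + 2(ℓ - a₂); i.e., the kernel of F^{(a₁ℓ+a₂)} on the eigenspace H = d equals the image of the eigenspace H = d+2(ℓ-a₂) under F^{(ℓ-a₂)}. -/

import Mathlib

/-!
`F^{(n)}` sends `m_k` to `[k+n choose n]_q m_{k+n}`. Hence, with `N = a₁ℓ + a₂`, the kernel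
condition says `[k+N choose N]_q = 0`, and, the weight space of `d + 2(ℓ - a₂)` being spanned by
`m_{k-(ℓ-a₂)}`, the image condition says `[k choose ℓ-a₂]_q ≠ 0`. Up to a power of `q` the
balanced binomial is the Gaussian binomial in `t = q⁻²`, a primitive `ℓ`-th root of unity. Since
`[ℓ choose n]_t = 0` for `0 < n < ℓ`, the q-Lucas theorem
`[aℓ+b choose cℓ+e]_t = (a choose c) [b choose e]_t` (`b, e < ℓ`) holds, so both conditions only
depend on the last base-`ℓ` digit `r` of `k`: the first holds iff `r + a₂ ≥ ℓ`, the second iff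
`r ≥ ℓ - a₂`.
-/

/-- The balanced Gaussian binomial coefficient. -/
noncomputable def gB (q : ℂ) : ℕ → ℕ → ℂ
  | _, 0 => 1
  | 0, _ + 1 => 0
  | m + 1, n + 1 => q ^ (-((n : ℤ) + 1)) * gB q m (n + 1) + q ^ ((m : ℤ) - n) * gB q m n

/-- Action of `F^{(n)}` on the Weyl module `Δ_q(i)`. -/
noncomputable def Fop (q : ℂ) (i n : ℕ) (v : ℤ → ℂ) : ℤ → ℂ :=
  fun k => if 0 ≤ k ∧ k ≤ (i : ℤ) then gB q k.toNat n * v (k - n) else 0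

/-- The basis vector `m_k` of the Weyl module. -/
noncomputable def delta (k : ℤ) : ℤ → ℂ := fun j => if j = k then 1 else 0

open Finset

section CommRing

variable {R : Type*} [CommRing R] (t : R)

def gaussBinom : ℕ → ℕ → R
  | _, 0 => 1
  | 0, _ + 1 => 0
  | m + 1, n + 1 => gaussBinom m n + t ^ (n + 1) * gaussBinom m (n + 1)

def qPochhammer (n : ℕ) : R := ∏ j ∈ range n, (1 - t ^ (j + 1))

@[simp]
lemma gaussBinom_zero_right (m : ℕ) : gaussBinom t m 0 = 1 := by
  cases m <;> rfl

@[simp]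
lemma gaussBinom_zero_succ (n : ℕ) : gaussBinom t 0 (n + 1) = 0 := rfl

lemma gaussBinom_succ_succ (m n : ℕ) :
    gaussBinom t (m + 1) (n + 1) = gaussBinom t m n + t ^ (n + 1) * gaussBinom t m (n + 1) :=
  rfl

lemma gaussBinom_eq_zero_of_lt : ∀ {m n : ℕ}, m < n → gaussBinom t m n = 0
  | 0, _ + 1, _ => rfl
  | m + 1, n + 1, h => by
    rw [gaussBinom_succ_succ, gaussBinom_eq_zero_of_lt (by omega),
      gaussBinom_eq_zero_of_lt (by omega), mul_zero, add_zero]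

@[simp]
lemma gaussBinom_self : ∀ m : ℕ, gaussBinom t m m = 1
  | 0 => rfl
  | m + 1 => by
    rw [gaussBinom_succ_succ, gaussBinom_self m, gaussBinom_eq_zero_of_lt t m.lt_succ_self,
      mul_zero, add_zero]

lemma qPochhammer_succ (n : ℕ) : qPochhammer t (n + 1) = qPochhammer t n * (1 - t ^ (n + 1)) :=
  prod_range_succ _ _

lemma gaussBinom_mul_qPochhammer_mul_qPochhammer :
    ∀ {m n : ℕ}, n ≤ m → gaussBinom t m n * (qPochhammer t n * qPochhammer t (m - n)) =
      qPochhammer t m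
  | m, 0, _ => by simp [qPochhammer]
  | m + 1, n + 1, h => by
    obtain rfl | hnm := (Nat.le_of_succ_le_succ h).eq_or_lt
    · simp [qPochhammer]
    obtain ⟨c, rfl⟩ := Nat.exists_eq_add_of_lt hnm
    have ih₁ := gaussBinom_mul_qPochhammer_mul_qPochhammer (m := n + c + 1) (n := n) (by omega)
    have ih₂ := gaussBinom_mul_qPochhammer_mul_qPochhammer (m := n + c + 1) (n := n + 1) (by omega)
    rw [show n + c + 1 - n = c + 1 by omega, qPochhammer_succ t c] at ih₁
    rw [show n + c + 1 - (n + 1) = c by omega, qPochhammer_succ t n] at ih₂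
    rw [show n + c + 1 + 1 - (n + 1) = c + 1 by omega, gaussBinom_succ_succ, qPochhammer_succ t n,
      qPochhammer_succ t c, qPochhammer_succ t (n + c + 1)]
    linear_combination (1 - t ^ (n + 1)) * ih₁ + t ^ (n + 1) * (1 - t ^ (c + 1)) * ih₂
      + qPochhammer t (n + c + 1) * (by ring : t ^ (n + 1) * t ^ (c + 1) = t ^ (n + c + 1 + 1))

end CommRing

section PrimitiveRoot

variable {R : Type*} [CommRing R] [IsDomain R] {t : R} {ℓ : ℕ}

lemma qPochhammer_eq_zero_iff (ht : IsPrimitiveRoot t ℓ) (hℓ : 0 < ℓ) {n : ℕ} :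
    qPochhammer t n = 0 ↔ ℓ ≤ n := by
  simp only [qPochhammer, prod_eq_zero_iff, mem_range, sub_eq_zero, eq_comm (a := (1 : R)),
    ht.pow_eq_one_iff_dvd]
  constructor
  · rintro ⟨j, hj, hdvd⟩
    exact (Nat.le_of_dvd j.succ_pos hdvd).trans hj
  · intro h
    exact ⟨ℓ - 1, by omega, by rw [Nat.sub_add_cancel hℓ]⟩

lemma gaussBinom_ne_zero (ht : IsPrimitiveRoot t ℓ) {m n : ℕ} (hnm : n ≤ m) (hm : m < ℓ) :
    gaussBinom t m n ≠ 0 :=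
  left_ne_zero_of_mul <| (gaussBinom_mul_qPochhammer_mul_qPochhammer t hnm).symm ▸
    mt (qPochhammer_eq_zero_iff ht (by omega)).1 (by omega)

lemma gaussBinom_eq_zero_iff_of_lt (ht : IsPrimitiveRoot t ℓ) {m n : ℕ} (hm : m < ℓ) :
    gaussBinom t m n = 0 ↔ m < n :=
  ⟨fun h => not_le.1 fun hnm => gaussBinom_ne_zero ht hnm hm h, gaussBinom_eq_zero_of_lt t⟩

lemma gaussBinom_order_eq_zero (ht : IsPrimitiveRoot t ℓ) {n : ℕ} (hn₀ : 0 < n) (hn : n < ℓ) :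
    gaussBinom t ℓ n = 0 := by
  have h := gaussBinom_mul_qPochhammer_mul_qPochhammer t hn.le
  rw [(qPochhammer_eq_zero_iff ht (by omega)).2 le_rfl] at h
  refine (mul_eq_zero.1 h).resolve_right (mul_ne_zero ?_ ?_) <;>
    rw [Ne, qPochhammer_eq_zero_iff ht (by omega)] <;> omega

lemma gaussBinom_add_order (ht : IsPrimitiveRoot t ℓ) (hℓ : 0 < ℓ) (m n : ℕ) :
    gaussBinom t (m + ℓ) n = gaussBinom t m n + if ℓ ≤ n then gaussBinom t m (n - ℓ) else 0 := by
  induction m generalizing n with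
  | zero =>
    rcases Nat.lt_trichotomy n ℓ with hn | rfl | hn
    · rcases n.eq_zero_or_pos with rfl | hn₀
      · simp [hℓ.ne']
      · simp [gaussBinom_order_eq_zero ht hn₀ hn, gaussBinom_eq_zero_of_lt t hn₀, hn.not_ge]
    · simp [gaussBinom_eq_zero_of_lt t hℓ]
    · simp [gaussBinom_eq_zero_of_lt t hn, gaussBinom_eq_zero_of_lt t (hℓ.trans hn), hn.le,
        gaussBinom_eq_zero_of_lt t (Nat.sub_pos_of_lt hn)]
  | succ m ih =>
    cases n with
    | zero => simp [hℓ.ne']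
    | succ n =>
      rw [Nat.add_right_comm, gaussBinom_succ_succ, ih, ih, gaussBinom_succ_succ]
      rcases Nat.lt_trichotomy (n + 1) ℓ with hn | hn | hn
      · simp [hn.not_ge, (Nat.lt_of_succ_lt hn).not_ge]
      · subst hn
        rw [ht.pow_eq_one]
        simp
        ring
      · obtain ⟨p, rfl⟩ := Nat.exists_eq_add_of_le (Nat.le_of_lt_succ hn)
        have htp : t ^ (ℓ + p + 1) = t ^ (p + 1) := by
          rw [add_assoc, pow_add, ht.pow_eq_one, one_mul]
        rw [if_pos (by omega), if_pos (by omega), if_pos (by omega),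
          show ℓ + p + 1 - ℓ = p + 1 by omega, show ℓ + p - ℓ = p by omega, gaussBinom_succ_succ,
          htp]
        ring

theorem gaussBinom_lucas (ht : IsPrimitiveRoot t ℓ) {b e : ℕ} (hb : b < ℓ) (he : e < ℓ)
    (a c : ℕ) : gaussBinom t (a * ℓ + b) (c * ℓ + e) = a.choose c * gaussBinom t b e := by
  have hℓ : 0 < ℓ := by omega
  induction a generalizing c with
  | zero =>
    cases c with
    | zero => simp
    | succ c => simp [gaussBinom_eq_zero_of_lt t (show b < (c + 1) * ℓ + e by nlinarith)]
  | succ a ih =>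
    rw [Nat.succ_mul, Nat.add_right_comm, gaussBinom_add_order ht hℓ]
    cases c with
    | zero => simpa [he.not_ge] using ih 0
    | succ c =>
      rw [if_pos (by nlinarith), show (c + 1) * ℓ + e - ℓ = c * ℓ + e by rw [Nat.succ_mul]; omega,
        ih, ih, Nat.choose_succ_succ']
      push_cast
      ring

theorem gaussBinom_eq_zero_iff [CharZero R] (ht : IsPrimitiveRoot t ℓ) (hℓ : 0 < ℓ) (m n : ℕ) :
    gaussBinom t m n = 0 ↔ m / ℓ < n / ℓ ∨ m % ℓ < n % ℓ := by
  have h := gaussBinom_lucas ht (Nat.mod_lt m hℓ) (Nat.mod_lt n hℓ) (m / ℓ) (n / ℓ)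
  rw [Nat.div_add_mod', Nat.div_add_mod'] at h
  rw [h, mul_eq_zero, Nat.cast_eq_zero, Nat.choose_eq_zero_iff,
    gaussBinom_eq_zero_iff_of_lt ht (Nat.mod_lt m hℓ)]

theorem gaussBinom_add_eq_zero_iff [CharZero R] (ht : IsPrimitiveRoot t ℓ) (hℓ : 0 < ℓ)
    (k n : ℕ) : gaussBinom t (k + n) n = 0 ↔ ℓ ≤ k % ℓ + n % ℓ := by
  rw [gaussBinom_eq_zero_iff ht hℓ, or_iff_right (Nat.div_le_div_right (by omega)).not_gt]
  have hcarry := Nat.add_mod_add_ite k n ℓ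
  have hk := Nat.mod_lt k hℓ
  split_ifs at hcarry <;> omega

end PrimitiveRoot

lemma gB_eq_zpow_mul_gaussBinom {q : ℂ} (hq : q ≠ 0) :
    ∀ m n : ℕ, gB q m n = q ^ ((n : ℤ) * (m - n)) * gaussBinom (q ^ 2)⁻¹ m n
  | m, 0 => by cases m <;> simp [gB]
  | 0, n + 1 => by simp [gB]
  | m + 1, n + 1 => by
    have hpow : ((q ^ 2)⁻¹) ^ (n + 1) = q ^ (-2 * ((n : ℤ) + 1)) := by
      rw [inv_pow, ← pow_mul, ← zpow_natCast, ← zpow_neg]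
      push_cast
      ring_nf
    rw [gB, gB_eq_zpow_mul_gaussBinom hq m (n + 1), gB_eq_zpow_mul_gaussBinom hq m n,
      gaussBinom_succ_succ, hpow]
    simp only [← mul_assoc, ← zpow_add₀ hq, mul_add]
    push_cast
    ring_nf

lemma gB_eq_zero_iff {q : ℂ} (hq : q ≠ 0) (m n : ℕ) :
    gB q m n = 0 ↔ gaussBinom (q ^ 2)⁻¹ m n = 0 := by
  rw [gB_eq_zpow_mul_gaussBinom hq, mul_eq_zero, or_iff_right (zpow_ne_zero _ hq)]

lemma delta_ne_zero (k : ℤ) : delta k ≠ 0 :=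
  fun h => one_ne_zero (α := ℂ) (by simpa [delta] using congrFun h k)

lemma eq_of_smul_delta_apply_ne_zero {c : ℂ} {k j : ℤ} (h : (c • delta k) j ≠ 0) : j = k := by
  by_contra hjk
  simp [delta, hjk] at h

lemma Fop_smul (q : ℂ) (i n : ℕ) (c : ℂ) (v : ℤ → ℂ) : Fop q i n (c • v) = c • Fop q i n v := by
  funext j
  simp only [Fop, Pi.smul_apply, smul_eq_mul]
  split_ifs <;> ring

lemma Fop_delta (q : ℂ) (i n : ℕ) (k : ℤ) :
    Fop q i n (delta k) =
      if 0 ≤ k + n ∧ k + n ≤ i then gB q (k + n).toNat n • delta (k + n) else 0 := by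
  funext j
  by_cases hj : j = k + n
  · subst hj
    split_ifs <;> simp_all [Fop, delta]
  · have hj' : j - n ≠ k := by omega
    split_ifs <;> simp [Fop, delta, hj, hj']

lemma Fop_delta_eq_zero_iff (q : ℂ) {i n k : ℕ} (h : k + n ≤ i) :
    Fop q i n (delta k) = 0 ↔ gB q (k + n) n = 0 := by
  rw [Fop_delta, if_pos (by omega), smul_eq_zero, or_iff_left (delta_ne_zero _), ← Nat.cast_add,
    Int.toNat_natCast]

lemma exists_delta_eq_Fop_iff {q : ℂ} (hq : q ≠ 0) {i n k : ℕ} (h : k ≤ i) :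
    (∃ y : ℤ → ℂ, (∀ j, y j ≠ 0 → 0 ≤ j ∧ j ≤ (i : ℤ)) ∧ (∀ j, y j ≠ 0 → j = k - n) ∧
      delta k = Fop q i n y) ↔ gB q k n ≠ 0 := by
  constructor
  · rintro ⟨y, -, -, hy⟩
    have hk := congrFun hy k
    simp only [delta, Fop, if_true, Int.toNat_natCast] at hk
    rw [if_pos (by omega)] at hk
    exact left_ne_zero_of_mul (hk.symm ▸ one_ne_zero)
  · intro hk
    have hnk : n ≤ k :=
      not_lt.1 fun hlt => hk ((gB_eq_zero_iff hq k n).2 (gaussBinom_eq_zero_of_lt _ hlt))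
    refine ⟨(gB q k n)⁻¹ • delta (k - n), fun j hj => ?_, fun j hj => ?_, ?_⟩
    · have := eq_of_smul_delta_apply_ne_zero hj
      omega
    · exact eq_of_smul_delta_apply_ne_zero hj
    · rw [Fop_smul, Fop_delta, sub_add_cancel, if_pos (by omega), Int.toNat_natCast, smul_smul,
        inv_mul_cancel₀ hk, one_smul]

theorem weyl_kernel_image_general (q : ℂ) (ℓ i : ℕ)
    (hq : IsPrimitiveRoot (q ^ 2) ℓ)
    (d k : ℤ) (hk0 : 0 ≤ k) (hdk : (i : ℤ) - 2 * k = d)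
    (a₁ a₂ : ℕ) (ha₂ : 1 ≤ a₂) (ha₂ℓ : a₂ < ℓ) (hda : ((a₁ * ℓ + a₂ : ℕ) : ℤ) ≤ d) :
    Fop q i (a₁ * ℓ + a₂) (delta k) = 0 ↔
      ∃ y : ℤ → ℂ, (∀ j, y j ≠ 0 → 0 ≤ j ∧ j ≤ (i : ℤ)) ∧
        (∀ j, y j ≠ 0 → (i : ℤ) - 2 * j = d + 2 * ((ℓ : ℤ) - (a₂ : ℤ))) ∧
        delta k = Fop q i (ℓ - a₂) y := by
  have hℓ : 0 < ℓ := by omega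
  have hq0 : q ≠ 0 := by
    rintro rfl
    exact hq.ne_zero hℓ.ne' (zero_pow two_ne_zero)
  lift k to ℕ using hk0
  have hweight (y : ℤ → ℂ) : (∀ j, y j ≠ 0 → (i : ℤ) - 2 * j = d + 2 * ((ℓ : ℤ) - (a₂ : ℤ))) ↔
      ∀ j, y j ≠ 0 → j = k - (ℓ - a₂ : ℕ) :=
    forall_congr' fun j => imp_congr_right fun _ => by omega
  simp only [hweight]
  rw [Fop_delta_eq_zero_iff q (by omega), exists_delta_eq_Fop_iff hq0 (by omega),
    gB_eq_zero_iff hq0, Ne, gB_eq_zero_iff hq0, gaussBinom_add_eq_zero_iff hq.inv hℓ,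
    gaussBinom_eq_zero_iff hq.inv hℓ, Nat.mul_add_mod', Nat.mod_eq_of_lt ha₂ℓ,
    Nat.div_eq_of_lt (by omega : ℓ - a₂ < ℓ), Nat.mod_eq_of_lt (by omega : ℓ - a₂ < ℓ),
    or_iff_right (Nat.not_lt_zero _)]
  -- both sides now say that the last base-`ℓ` digit `k % ℓ` of `k` is at least `ℓ - a₂`
  omega

/-- In the Weyl module `Δ_q(i)`, for an `H`-eigenvalue `d > 0` (eigenspace `ℂ·m_k`,
`i - 2k = d`) and `a₁ ≥ 0`, `1 ≤ a₂ < ℓ` with `d ≥ a₁ℓ + a₂`: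
`F^{(a₁ℓ+a₂)} m_k = 0` iff `m_k = F^{(ℓ-a₂)} y` for some `y` in the `H`-eigenspace of
eigenvalue `d + 2(ℓ - a₂)`. -/
theorem weyl_kernel_image (q : ℂ) (ℓ i : ℕ) (hq0 : q ≠ 0) (hℓ : 2 ≤ ℓ)
    (hq : IsPrimitiveRoot (q ^ 2) ℓ)
    (d k : ℤ) (hd : 0 < d) (hk0 : 0 ≤ k) (hki : k ≤ (i : ℤ)) (hdk : (i : ℤ) - 2 * k = d)
    (a₁ a₂ : ℕ) (ha₂ : 1 ≤ a₂) (ha₂ℓ : a₂ < ℓ) (hda : ((a₁ * ℓ + a₂ : ℕ) : ℤ) ≤ d) :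
    Fop q i (a₁ * ℓ + a₂) (delta k) = 0 ↔
      ∃ y : ℤ → ℂ, (∀ j, y j ≠ 0 → 0 ≤ j ∧ j ≤ (i : ℤ)) ∧
        (∀ j, y j ≠ 0 → (i : ℤ) - 2 * j = d + 2 * ((ℓ : ℤ) - (a₂ : ℤ))) ∧
        delta k = Fop q i (ℓ - a₂) y :=
  weyl_kernel_image_general q ℓ i hq d k hk0 hdk a₁ a₂ ha₂ ha₂ℓ hda
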